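/- arXiv:0911.4596 — 2 statements merged into one kernel-verified Lean document; each statement's English description precedes it below -/
import Mathlib

section
/- Let n, p be positive integers and q an odd integer with q ≥ 3 and 1 ≤ p < q/2. Then the n-th derivative of the function x ↦ sec(πx) = 1/cos(πx) evaluated at x = p/q equals i^{n} · (2πq)^n · Σ_{α=1}^{q} (−1)^{α−1} e^{πi(2α−1)p/q} · E_n((2α−1)/(2q)), where E_n is the n-th Euler polynomial and i = √(−1). -/
open Real Complex Finset

/-- The Euler polynomial `E_n`, expressed through Bernoulli polynomials via the identity
`E_n(x) = (2/(n+1)) * (B_{n+1}(x) - 2^{n+1} * B_{n+1}(x/2))`. -/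
noncomputable def eulerPolyEval (n : ℕ) (x : ℚ) : ℚ :=
  2 / (n + 1) * (Polynomial.eval x (Polynomial.bernoulli (n + 1)) -
    2 ^ (n + 1) * Polynomial.eval (x / 2) (Polynomial.bernoulli (n + 1)))

/-!
For odd `q`, the alternating geometric sum gives, for every real `x`,
`cos(πx) · 2 ∑_{α=1}^{q} (-1)^{α-1} e^{(2α-1)πix} = e^{2πiqx} + 1`.
Near `a = p/q` we have `cos(πa) ≠ 0` and `e^{2πiqa} = 1`, so the Leibniz rule applied to
`S(x) · (e^{2πiqx} + 1)`, `S(x) = sec(πx)`, gives with `c = 2πiq`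
`∑_{k ≤ m} C(m,k) c^{m-k} S^{(k)}(a) + S^{(m)}(a) = ∑_α 2 (-1)^{α-1} ((2α-1)πi)^m e^{(2α-1)πia}`.
The generating function `2e^{ty}/(e^t + 1)` of the Euler polynomials shows that
`c^m ∑_α (-1)^{α-1} e^{(2α-1)πia} E_m((2α-1)/(2q))` satisfies the same recurrence, and the
recurrence determines its solution since the coefficient of the top term is `2`.
-/

open Topology

section
open PowerSeries
open scoped Nat

noncomputable def egf (a : ℕ → ℚ) : ℚ⟦X⟧ := PowerSeries.mk fun n => a n / n !

theorem coeff_egf (a : ℕ → ℚ) (n : ℕ) : coeff n (egf a) = a n / n ! := coeff_mk _ _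

theorem coeff_egf_mul_exp (a : ℕ → ℚ) (m : ℕ) :
    coeff m (egf a * exp ℚ) = (∑ k ∈ range (m + 1), m.choose k * a k) / m ! := by
  rw [coeff_mul, Nat.sum_antidiagonal_eq_sum_range_succ_mk, sum_div]
  refine sum_congr rfl fun k hk => ?_
  rw [coeff_egf, coeff_exp, Nat.cast_choose ℚ (mem_range_succ_iff.mp hk)]
  simp only [Algebra.algebraMap_self, RingHom.id_apply]
  field_simp

theorem egf_bernoulli_mul_exp_sub_one (t : ℚ) :
    egf (fun n => (Polynomial.bernoulli n).eval t) * (exp ℚ - 1) = X * rescale t (exp ℚ) := by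
  convert Polynomial.bernoulli_generating_function t using 3 with n
  simp [egf, Polynomial.aeval_def, div_eq_inv_mul]

theorem X_mul_egf_eulerPolyEval (y : ℚ) :
    X * egf (eulerPolyEval · y) = 2 * (egf (fun n => (Polynomial.bernoulli n).eval y) -
      rescale 2 (egf fun n => (Polynomial.bernoulli n).eval (y / 2))) := by
  ext n
  rw [← map_ofNat C, coeff_C_mul, map_sub, coeff_rescale, coeff_egf, coeff_egf]
  cases n with
  | zero => simp
  | succ n =>
    rw [coeff_succ_X_mul, coeff_egf, eulerPolyEval, Nat.factorial_succ]
    push_cast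
    field_simp

theorem egf_eulerPolyEval_mul_exp_add_one (y : ℚ) :
    egf (eulerPolyEval · y) * (exp ℚ + 1) = 2 * rescale y (exp ℚ) := by
  have hexp : exp ℚ - 1 ≠ 0 := fun h => by
    simpa [coeff_exp] using congrArg (coeff 1) h
  have hsq : (exp ℚ + 1) * (exp ℚ - 1) = rescale 2 (exp ℚ - 1) := by
    have := exp_pow_eq_rescale_exp (A := ℚ) 2
    rw [Nat.cast_ofNat] at this
    rw [map_sub, map_one, ← this]; ring
  refine mul_left_cancel₀ X_ne_zero (mul_left_cancel₀ hexp ?_)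
  calc (exp ℚ - 1) * (X * (egf (eulerPolyEval · y) * (exp ℚ + 1)))
      = 2 * (egf (fun n => (Polynomial.bernoulli n).eval y) * (exp ℚ - 1) * (exp ℚ + 1) -
          rescale 2 (egf (fun n => (Polynomial.bernoulli n).eval (y / 2)) * (exp ℚ - 1))) := by
        rw [← mul_assoc X, X_mul_egf_eulerPolyEval, map_mul, ← hsq]; ring
    _ = (exp ℚ - 1) * (X * (2 * rescale y (exp ℚ))) := by
        rw [egf_bernoulli_mul_exp_sub_one, egf_bernoulli_mul_exp_sub_one, map_mul, rescale_X,
          rescale_rescale, div_mul_cancel₀ y two_ne_zero, map_ofNat]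
        ring

theorem sum_choose_mul_eulerPolyEval_add (m : ℕ) (y : ℚ) :
    ∑ k ∈ range (m + 1), m.choose k * eulerPolyEval k y + eulerPolyEval m y = 2 * y ^ m := by
  have h := congrArg (coeff m) (egf_eulerPolyEval_mul_exp_add_one y)
  rw [mul_add, mul_one, map_add, coeff_egf_mul_exp, coeff_egf, ← map_ofNat C,
    coeff_C_mul, coeff_rescale, coeff_exp] at h
  have : (m ! : ℚ) ≠ 0 := by positivity
  simp only [Algebra.algebraMap_self, RingHom.id_apply] at h
  field_simp at h
  linear_combination h

end

/-- The coefficients `m! [t^m]` of `(e^{ct} + 1) · ∑ u_k t^k / k!`. -/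
def expAddOneMul {R : Type*} [CommRing R] (c : R) (u : ℕ → R) (m : ℕ) : R :=
  ∑ k ∈ range (m + 1), m.choose k * c ^ (m - k) * u k + u m

theorem expAddOneMul_injective {R : Type*} [CommRing R] [NoZeroDivisors R] [NeZero (2 : R)]
    (c : R) : Function.Injective (expAddOneMul c) := by
  intro u v huv
  funext m
  induction m using Nat.strong_induction_on with
  | _ m ih =>
    have h := congrFun huv m
    simp only [expAddOneMul, sum_range_succ, Nat.choose_self, Nat.sub_self, pow_zero,
      Nat.cast_one, one_mul] at h
    rw [sum_congr rfl fun k hk => by rw [ih k (mem_range.mp hk)]] at h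
    exact mul_left_cancel₀ two_ne_zero (by linear_combination h : (2 : R) * u m = 2 * v m)

theorem expAddOneMul_eulerPolyEval {K ι : Type*} [Field K] [CharZero K] (s : Finset ι)
    (b : ι → K) (y : ι → ℚ) (c : K) (m : ℕ) :
    expAddOneMul c (fun k => c ^ k * ∑ i ∈ s, b i * (eulerPolyEval k (y i) : K)) m
      = ∑ i ∈ s, 2 * b i * (c * y i) ^ m := by
  simp only [expAddOneMul, mul_sum]
  rw [sum_comm, ← sum_add_distrib]
  refine sum_congr rfl fun i _ => ?_
  have hrec := congrArg (Rat.cast : ℚ → K) (sum_choose_mul_eulerPolyEval_add m (y i))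
  push_cast at hrec
  calc ∑ k ∈ range (m + 1), m.choose k * c ^ (m - k) * (c ^ k * (b i * eulerPolyEval k (y i)))
        + c ^ m * (b i * eulerPolyEval m (y i))
      = c ^ m * b i * (∑ k ∈ range (m + 1), m.choose k * (eulerPolyEval k (y i) : K)
          + eulerPolyEval m (y i)) := by
        rw [mul_add, mul_sum]
        congr 1
        · refine sum_congr rfl fun k hk => ?_
          rw [← pow_sub_mul_pow c (mem_range_succ_iff.mp hk)]
          ring
        · ring
    _ = 2 * b i * (c * y i) ^ m := by rw [hrec]; ring

theorem ContinuousLinearMap.iteratedDeriv_comp_left {𝕜 F G : Type*} [NontriviallyNormedField 𝕜]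
    [NormedAddCommGroup F] [NormedSpace 𝕜 F] [NormedAddCommGroup G] [NormedSpace 𝕜 G]
    (g : F →L[𝕜] G) {f : 𝕜 → F} {x : 𝕜} {n : ℕ} (hf : ContDiffAt 𝕜 n f x) :
    iteratedDeriv n (g ∘ f) x = g (iteratedDeriv n f x) := by
  simp [iteratedDeriv_eq_iteratedFDeriv, g.iteratedFDeriv_comp_left hf le_rfl]

theorem iteratedDeriv_ofReal_comp {f : ℝ → ℝ} {x : ℝ} {n : ℕ} (hf : ContDiffAt ℝ n f x) :
    iteratedDeriv n (fun y => (f y : ℂ)) x = iteratedDeriv n f x :=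
  ofRealCLM.iteratedDeriv_comp_left hf

theorem iteratedDeriv_cexp_const_mul_ofReal (n : ℕ) (c : ℂ) :
    iteratedDeriv n (fun x : ℝ => cexp (c * x)) = fun x : ℝ => c ^ n * cexp (c * x) := by
  induction n with
  | zero => simp
  | succ n ih =>
    rw [iteratedDeriv_succ, ih]
    funext x
    have hlin : HasDerivAt (fun y : ℝ => c * y) c x := by
      simpa using (ofRealCLM.hasDerivAt (x := x)).const_mul c
    rw [(hlin.cexp.const_mul (c ^ n)).deriv, pow_succ]
    ring

theorem contDiff_cexp_const_mul_ofReal {n : WithTop ℕ∞} (c : ℂ) :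
    ContDiff ℝ n fun x : ℝ => cexp (c * x) :=
  (contDiff_const.mul ofRealCLM.contDiff).cexp

theorem iteratedDeriv_sum_mul_cexp {ι : Type*} (s : Finset ι) (b w : ι → ℂ) (n : ℕ) (x : ℝ) :
    iteratedDeriv n (fun y : ℝ => ∑ i ∈ s, b i * cexp (w i * y)) x
      = ∑ i ∈ s, b i * w i ^ n * cexp (w i * x) := by
  have hexp (i : ι) : ContDiffAt ℝ n (fun y : ℝ => cexp (w i * y)) x :=
    (contDiff_cexp_const_mul_ofReal (w i)).contDiffAt
  rw [iteratedDeriv_fun_sum fun i _ => contDiffAt_const.mul (hexp i)]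
  refine sum_congr rfl fun i _ => ?_
  rw [iteratedDeriv_const_mul (b i) (hexp i), iteratedDeriv_cexp_const_mul_ofReal, mul_assoc]

theorem iteratedDeriv_mul_cexp_add_one {f : ℝ → ℂ} {x : ℝ} {c : ℂ} {m : ℕ}
    (hf : ContDiffAt ℝ m f x) (hcx : cexp (c * x) = 1) :
    iteratedDeriv m (fun y => f y * (cexp (c * y) + 1)) x
      = expAddOneMul c (fun k => iteratedDeriv k f x) m := by
  have hexp : ContDiffAt ℝ m (fun y : ℝ => cexp (c * y)) x :=
    (contDiff_cexp_const_mul_ofReal c).contDiffAt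
  simp_rw [mul_add_one]
  rw [iteratedDeriv_fun_add (hf.mul hexp) hf, iteratedDeriv_fun_mul hf hexp, expAddOneMul]
  simp_rw [iteratedDeriv_cexp_const_mul_ofReal, hcx, mul_one, mul_right_comm _ (c ^ _)]

theorem one_add_sq_mul_sum_Icc_alternating {R : Type*} [CommRing R] {q : ℕ} (hq : Odd q) (ζ : R) :
    (1 + ζ ^ 2) * ∑ α ∈ Icc 1 q, (-1) ^ (α - 1) * ζ ^ (2 * α - 1) = ζ * (1 + ζ ^ (2 * q)) := by
  have hreindex : ∑ α ∈ Icc 1 q, (-1) ^ (α - 1) * ζ ^ (2 * α - 1)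
      = ζ * ∑ β ∈ range q, (-ζ ^ 2) ^ β := by
    rw [← Finset.Ico_add_one_right_eq_Icc, Finset.sum_Ico_eq_sum_range, mul_sum,
      Nat.add_sub_cancel]
    refine sum_congr rfl fun β _ => ?_
    rw [show 2 * (1 + β) - 1 = 2 * β + 1 by omega, Nat.add_sub_cancel_left, neg_pow, pow_succ,
      pow_mul]
    ring
  have hgeom := mul_neg_geom_sum (-ζ ^ 2) q
  rw [hq.neg_pow, sub_neg_eq_add, sub_neg_eq_add, ← pow_mul] at hgeom
  rw [hreindex, mul_left_comm, hgeom]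

theorem cos_pi_mul_mul_sum_cexp {q : ℕ} (hq : Odd q) (x : ℝ) :
    (Real.cos (π * x) : ℂ) *
        ∑ α ∈ Icc 1 q, 2 * (-1) ^ (α - 1) * cexp ((2 * α - 1 : ℕ) * (π * I) * x)
      = cexp (2 * π * I * q * x) + 1 := by
  set ζ := cexp (π * I * x)
  have hpow (k : ℕ) : cexp (k * (π * I) * x) = ζ ^ k := by
    rw [← Complex.exp_nat_mul]; ring_nf
  have hcos : 2 * (Real.cos (π * x) : ℂ) * ζ = 1 + ζ ^ 2 := by
    rw [ofReal_cos, two_cos, add_mul, ← Complex.exp_add, ← Complex.exp_add, ← hpow]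
    push_cast
    ring_nf
    rw [Complex.exp_zero, add_comm]
  have h2q : cexp (2 * π * I * q * x) = ζ ^ (2 * q) := by
    rw [← hpow]; push_cast; ring_nf
  refine mul_left_cancel₀ (Complex.exp_ne_zero (π * I * x)) ?_
  simp_rw [hpow, h2q]
  calc ζ * ((Real.cos (π * x) : ℂ) * ∑ α ∈ Icc 1 q, 2 * (-1) ^ (α - 1) * ζ ^ (2 * α - 1))
      = 2 * (Real.cos (π * x) : ℂ) * ζ * ∑ α ∈ Icc 1 q, (-1) ^ (α - 1) * ζ ^ (2 * α - 1) := by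
        simp_rw [mul_sum]; ring_nf
    _ = ζ * (ζ ^ (2 * q) + 1) := by
        rw [hcos, one_add_sq_mul_sum_Icc_alternating hq, add_comm]

theorem Real.cos_pi_mul_intCast_div_ne_zero (p : ℤ) {q : ℤ} (hq : Odd q) :
    Real.cos (π * (p / q)) ≠ 0 := by
  rw [Real.cos_ne_zero_iff]
  intro k hk
  have hq0 : (q : ℝ) ≠ 0 := by
    rintro h
    simp [Int.cast_eq_zero.mp h] at hq
  have hpk : 2 * p = (2 * k + 1) * q := by
    have : (2 * p : ℝ) = (2 * k + 1) * q := by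
      field_simp at hk
      linear_combination hk
    exact_mod_cast this
  have hodd : Odd (2 * p) := hpk ▸ (odd_two_mul_add_one k).mul hq
  exact Int.not_even_iff_odd.mpr hodd (even_two_mul p)

theorem sec_pi_mul_mul_cexp_add_one_eventuallyEq {q : ℕ} (hq : Odd q) {a : ℝ}
    (hcos : Real.cos (π * a) ≠ 0) :
    (fun x : ℝ => ((1 / Real.cos (π * x) : ℝ) : ℂ) * (cexp (2 * π * I * q * x) + 1)) =ᶠ[𝓝 a]
      fun x => ∑ α ∈ Icc 1 q, 2 * (-1) ^ (α - 1) * cexp ((2 * α - 1 : ℕ) * (π * I) * x) := by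
  have hcont : Continuous fun x : ℝ => Real.cos (π * x) := by fun_prop
  filter_upwards [hcont.continuousAt.eventually_ne hcos] with x hx
  rw [← cos_pi_mul_mul_sum_cexp hq x, ← mul_assoc, ← ofReal_mul, one_div_mul_cancel hx,
    ofReal_one, one_mul]

theorem ofReal_iteratedDeriv_sec_pi_mul {q : ℕ} (hq : Odd q) {a : ℝ}
    (hcos : Real.cos (π * a) ≠ 0) (hqa : cexp (2 * π * I * q * a) = 1) (m : ℕ) :
    ((iteratedDeriv m (fun x : ℝ => 1 / Real.cos (π * x)) a : ℝ) : ℂ) =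
      (2 * π * I * q) ^ m *
        ∑ α ∈ Icc 1 q, (-1) ^ (α - 1) * cexp ((2 * α - 1 : ℕ) * (π * I) * a) *
          (eulerPolyEval m (((2 * α - 1 : ℕ) : ℚ) / (2 * q)) : ℂ) := by
  have hsec : ContDiffAt ℝ ⊤ (fun x : ℝ => 1 / Real.cos (π * x)) a :=
    contDiffAt_const.div (Real.contDiff_cos.comp (contDiff_const.mul contDiff_id)).contDiffAt hcos
  have hF : ContDiffAt ℝ ⊤ (fun x : ℝ => ((1 / Real.cos (π * x) : ℝ) : ℂ)) a :=
    ofRealCLM.contDiff.contDiffAt.comp a hsec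
  have hq0 : (q : ℂ) ≠ 0 := by exact_mod_cast hq.pos.ne'
  rw [← iteratedDeriv_ofReal_comp (hsec.of_le le_top)]
  revert m
  rw [← funext_iff]
  refine expAddOneMul_injective (2 * π * I * q) (funext fun m => ?_)
  rw [← iteratedDeriv_mul_cexp_add_one (hF.of_le le_top) (by simpa [mul_assoc] using hqa),
    (sec_pi_mul_mul_cexp_add_one_eventuallyEq hq hcos).iteratedDeriv_eq,
    iteratedDeriv_sum_mul_cexp, expAddOneMul_eulerPolyEval]
  refine sum_congr rfl fun α _ => ?_
  push_cast
  field_simp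

theorem iteratedDeriv_sec_ratPi_odd_general (n p q : ℕ) (hq : Odd q) :
    ((iteratedDeriv n (fun x : ℝ => 1 / Real.cos (Real.pi * x)) ((p : ℝ) / q) : ℝ) : ℂ) =
      Complex.I ^ n * (2 * Real.pi * q) ^ n *
        ∑ α ∈ Finset.Icc 1 q,
          (-1 : ℂ) ^ (α - 1) * Complex.exp (Real.pi * Complex.I * (2 * α - 1) * p / q) *
            ((eulerPolyEval n (((2 * α - 1 : ℕ) : ℚ) / (2 * q)) : ℚ) : ℂ) := by
  have hcos : Real.cos (π * (p / q)) ≠ 0 := by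
    simpa using Real.cos_pi_mul_intCast_div_ne_zero p (by exact_mod_cast hq : Odd (q : ℤ))
  have hqa : cexp (2 * π * I * q * (p / q : ℝ)) = 1 := by
    have hq0 : (q : ℂ) ≠ 0 := by exact_mod_cast hq.pos.ne'
    rw [← Complex.exp_nat_mul_two_pi_mul_I p]
    push_cast
    field_simp
  rw [ofReal_iteratedDeriv_sec_pi_mul hq hcos hqa, ← mul_pow,
    show I * (2 * π * q) = 2 * π * I * q by ring]
  congr 1
  refine sum_congr rfl fun α hα => ?_
  push_cast [Nat.cast_sub (by grind : 1 ≤ 2 * α)]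
  ring_nf

/-- **Theorem 2(ii), odd case** (Cvijović): closed form for the derivatives of the secant
function at rational multiples of π with odd denominator, in terms of Euler polynomials. -/
theorem iteratedDeriv_sec_ratPi_odd (n p q : ℕ) (hn : 0 < n) (hp : 1 ≤ p)
    (hq : Odd q) (hq3 : 3 ≤ q) (hpq : 2 * p < q) :
    ((iteratedDeriv n (fun x : ℝ => 1 / Real.cos (Real.pi * x)) ((p : ℝ) / q) : ℝ) : ℂ) =
      Complex.I ^ n * (2 * Real.pi * q) ^ n *
        ∑ α ∈ Finset.Icc 1 q,
          (-1 : ℂ) ^ (α - 1) * Complex.exp (Real.pi * Complex.I * (2 * α - 1) * p / q) *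
            ((eulerPolyEval n (((2 * α - 1 : ℕ) : ℚ) / (2 * q)) : ℚ) : ℂ) :=
  iteratedDeriv_sec_ratPi_odd_general n p q hq
end

section
/- For every positive integer n, the (2n)-th derivative of the function x ↦ csc(πx) evaluated at x = 1/2 equals (−1)^{n−1} · (4(4π)^{2n}/(2n+1)) · B_{2n+1}(1/4), where B_{2n+1} is the (2n+1)-st Bernoulli polynomial. -/
/-!
Near `x = 1/2` the function `f x = 1 / sin (π x)` satisfies `f x * sin (π x) = 1`, so by the
Leibniz rule its derivatives `a k = f⁽ᵏ⁾ (1/2)` obey `∑ₖ C(n,k) a k π^(n-k) sin⁽ⁿ⁻ᵏ⁾ (π/2) = 0`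
for `n ≥ 1`; together with `a 0 = 1` this determines them. The sequence `π^k E k`, with
`E (2j) = (-1)^(j+1) 4^(2j+1) B_{2j+1}(1/4) / (2j+1)` and `E (2j+1) = 0`, obeys the same
recurrence: for `n = 2m` it reduces to `∑ⱼ C(2m+1,2j+1) 4^(2j+1) B_{2j+1}(1/4) = 0`. By the
addition theorem, `∑ₖ C(N,k) B_k(1/4) (±4)^k = (±4)^N B_N(1/4 ± 1/4)`, and for odd `N ≥ 3`
both `B_N(1/2)` and `B_N(0)` vanish; the difference of the two sums is twice the odd part.
-/

open Finset Topology

theorem Finset.sum_range_two_mul {M : Type*} [AddCommMonoid M] (f : ℕ → M) (m : ℕ) :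
    ∑ k ∈ range (2 * m), f k = ∑ j ∈ range m, (f (2 * j) + f (2 * j + 1)) := by
  induction m with
  | zero => simp
  | succ m ih =>
    rw [mul_add, mul_one, sum_range_succ, sum_range_succ, sum_range_succ, ih, add_assoc]

namespace Polynomial

theorem natDegree_bernoulli_le (n : ℕ) : (bernoulli n).natDegree ≤ n :=
  natDegree_le_iff_coeff_eq_zero.mpr fun i hi => by
    rw [coeff_bernoulli, if_neg (by exact_mod_cast hi.not_ge)]

theorem iterate_derivative_bernoulli (k n : ℕ) :
    derivative^[k] (bernoulli n) = n.descFactorial k • bernoulli (n - k) := by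
  induction k with
  | zero => simp
  | succ k ih =>
    rw [Function.iterate_succ_apply', ih, derivative_smul, derivative_bernoulli,
      Nat.descFactorial_succ, Nat.sub_sub, mul_comm (n - k), mul_smul, nsmul_eq_mul (n - k)]

theorem hasseDeriv_bernoulli (k n : ℕ) :
    hasseDeriv k (bernoulli n) = n.choose k • bernoulli (n - k) := by
  apply smul_right_injective ℚ[X] (Nat.factorial_ne_zero k)
  dsimp only
  rw [← LinearMap.smul_apply, factorial_smul_hasseDeriv, iterate_derivative_bernoulli,
    Nat.descFactorial_eq_factorial_mul_choose, mul_smul]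

theorem bernoulli_eval_add (n : ℕ) (x y : ℚ) :
    (bernoulli n).eval (x + y) =
      ∑ k ∈ range (n + 1), n.choose k * (bernoulli k).eval x * y ^ (n - k) := by
  rw [add_comm, ← taylor_eval, eval_eq_sum_range' ((natDegree_taylor _ _).trans_lt
    (Nat.lt_succ_of_le (natDegree_bernoulli_le n))), ← sum_range_reflect]
  refine sum_congr rfl fun k hk => ?_
  have hk : k ≤ n := Nat.lt_succ_iff.mp (mem_range.mp hk)
  rw [taylor_coeff, hasseDeriv_bernoulli, Nat.succ_sub_one, Nat.sub_sub_self hk,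
    Nat.choose_symm hk, eval_smul, nsmul_eq_mul]

theorem bernoulli_eval_one_half_of_odd {n : ℕ} (hn : Odd n) : (bernoulli n).eval (1 / 2) = 0 := by
  have h := bernoulli_eval_one_sub n (1 / 2)
  rw [hn.neg_one_pow, show (1 : ℚ) - 1 / 2 = 1 / 2 by norm_num] at h
  linarith

theorem sum_choose_mul_bernoulli_eval_mul_pow (n : ℕ) (x : ℚ) {c : ℚ} (hc : c ≠ 0) :
    ∑ k ∈ range (n + 1), n.choose k * (bernoulli k).eval x * c ^ k =
      c ^ n * (bernoulli n).eval (x + c⁻¹) := by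
  rw [bernoulli_eval_add, mul_sum]
  refine sum_congr rfl fun k hk => ?_
  rw [← Nat.add_sub_cancel' (Nat.lt_succ_iff.mp (mem_range.mp hk)), pow_add,
    Nat.add_sub_cancel_left, inv_pow]
  field_simp

theorem sum_choose_mul_four_pow_mul_bernoulli_odd_eval_one_fourth {m : ℕ} (hm : 0 < m) :
    ∑ j ∈ range (m + 1),
      (2 * m + 1).choose (2 * j + 1) * 4 ^ (2 * j + 1) * (bernoulli (2 * j + 1)).eval (1 / 4) =
      (0 : ℚ) := by
  have hodd : Odd (2 * m + 1) := odd_two_mul_add_one m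
  have h_pos := sum_choose_mul_bernoulli_eval_mul_pow (2 * m + 1) (1 / 4) (c := 4) (by norm_num)
  have h_neg := sum_choose_mul_bernoulli_eval_mul_pow (2 * m + 1) (1 / 4) (c := -4) (by norm_num)
  rw [show (1 / 4 + 4⁻¹ : ℚ) = 1 / 2 by norm_num, bernoulli_eval_one_half_of_odd hodd,
    mul_zero] at h_pos
  rw [show (1 / 4 + (-4)⁻¹ : ℚ) = 0 by norm_num, bernoulli_eval_zero,
    bernoulli_eq_zero_of_odd hodd (by omega), mul_zero] at h_neg
  calc _ = (∑ k ∈ range (2 * m + 1 + 1), (2 * m + 1).choose k * (bernoulli k).eval (1 / 4) *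
          ((4 : ℚ) ^ k - (-4) ^ k)) / 2 := by
        rw [show 2 * m + 1 + 1 = 2 * (m + 1) by ring, sum_range_two_mul, sum_div]
        refine sum_congr rfl fun j _ => ?_
        rw [Even.neg_pow (even_two_mul _), Odd.neg_pow (odd_two_mul_add_one _)]
        ring
    _ = 0 := by simp only [mul_sub, sum_sub_distrib, h_pos, h_neg, sub_zero, zero_div]

end Polynomial

open Real

/-- The derivatives of `sec` at `0` (`1, 0, 1, 0, 5, 0, 61, …`), given by their closed form. -/
noncomputable def secantNumber (k : ℕ) : ℚ :=
  if Even k then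
    (-1) ^ (k / 2 + 1) * 4 ^ (k + 1) * (Polynomial.bernoulli (k + 1)).eval (1 / 4) / (k + 1)
  else 0

theorem secantNumber_two_mul (j : ℕ) :
    secantNumber (2 * j) =
      (-1) ^ (j + 1) * 4 ^ (2 * j + 1) * (Polynomial.bernoulli (2 * j + 1)).eval (1 / 4) /
        (2 * j + 1) := by
  rw [secantNumber, if_pos (even_two_mul j), Nat.mul_div_cancel_left j two_pos]
  push_cast
  rfl

theorem secantNumber_two_mul_add_one (j : ℕ) : secantNumber (2 * j + 1) = 0 :=
  if_neg (Nat.not_even_iff_odd.mpr (odd_two_mul_add_one j))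

theorem secantNumber_zero : secantNumber 0 = 1 := by
  norm_num [secantNumber, Polynomial.bernoulli_one]

namespace Real

theorem iteratedDeriv_two_mul_sin_pi_div_two (i : ℕ) :
    iteratedDeriv (2 * i) sin (π / 2) = (-1) ^ i := by
  simp

theorem iteratedDeriv_two_mul_add_one_sin_pi_div_two (i : ℕ) :
    iteratedDeriv (2 * i + 1) sin (π / 2) = 0 := by
  simp

end Real

theorem choose_mul_secantNumber_two_mul_mul_neg_one_pow {m j : ℕ} (hj : j ≤ m) :
    (2 * m).choose (2 * j) * secantNumber (2 * j) * (-1) ^ (m - j) =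
      (-1) ^ (m + 1) / (2 * m + 1) * ((2 * m + 1).choose (2 * j + 1) * 4 ^ (2 * j + 1) *
        (Polynomial.bernoulli (2 * j + 1)).eval (1 / 4)) := by
  have h_choose : ((2 * m + 1 : ℕ) : ℚ) * (2 * m).choose (2 * j) =
      (2 * m + 1).choose (2 * j + 1) * ((2 * j + 1 : ℕ) : ℚ) := by
    exact_mod_cast Nat.add_one_mul_choose_eq (2 * m) (2 * j)
  have h_sign : (-1 : ℚ) ^ (j + 1) * (-1) ^ (m - j) = (-1) ^ (m + 1) := by
    rw [← pow_add, show j + 1 + (m - j) = m + 1 by omega]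
  rw [secantNumber_two_mul]
  push_cast at h_choose
  field_simp
  linear_combination (Polynomial.bernoulli (2 * j + 1)).eval (1 / 4 : ℚ) *
    ((-1) ^ (j + 1) * (-1) ^ (m - j) * h_choose +
      (2 * m + 1).choose (2 * j + 1) * (2 * j + 1) * h_sign)

theorem sum_choose_mul_secantNumber_mul_iteratedDeriv_sin {n : ℕ} (hn : 0 < n) :
    ∑ k ∈ range (n + 1), n.choose k * (secantNumber k : ℝ) * iteratedDeriv (n - k) sin (π / 2) =
      0 := by
  obtain ⟨m, rfl | rfl⟩ := n.even_or_odd'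
  · have hm : 0 < m := by omega
    have h_ext : ∑ k ∈ range (2 * m + 1),
        (2 * m).choose k * (secantNumber k : ℝ) * iteratedDeriv (2 * m - k) sin (π / 2) =
        ∑ k ∈ range (2 * (m + 1)),
          (2 * m).choose k * (secantNumber k : ℝ) * iteratedDeriv (2 * m - k) sin (π / 2) := by
      rw [show 2 * (m + 1) = 2 * m + 1 + 1 by ring, sum_range_succ _ (2 * m + 1),
        Nat.choose_succ_self, Nat.cast_zero, zero_mul, zero_mul, add_zero]
    have h_term : ∀ j ∈ range (m + 1),
        (2 * m).choose (2 * j) * (secantNumber (2 * j) : ℝ) *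
            iteratedDeriv (2 * m - 2 * j) sin (π / 2) +
          (2 * m).choose (2 * j + 1) * (secantNumber (2 * j + 1) : ℝ) *
            iteratedDeriv (2 * m - (2 * j + 1)) sin (π / 2) =
        (-1) ^ (m + 1) / (2 * m + 1) * (((2 * m + 1).choose (2 * j + 1) * 4 ^ (2 * j + 1) *
          (Polynomial.bernoulli (2 * j + 1)).eval (1 / 4) : ℚ) : ℝ) := by
      intro j hj
      have hjm : j ≤ m := Nat.lt_succ_iff.mp (mem_range.mp hj)
      rw [secantNumber_two_mul_add_one, Rat.cast_zero, mul_zero, zero_mul, add_zero,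
        show 2 * m - 2 * j = 2 * (m - j) by omega, Real.iteratedDeriv_two_mul_sin_pi_div_two]
      exact_mod_cast choose_mul_secantNumber_two_mul_mul_neg_one_pow hjm
    have key := congrArg (Rat.cast : ℚ → ℝ)
      (Polynomial.sum_choose_mul_four_pow_mul_bernoulli_odd_eval_one_fourth hm)
    rw [Rat.cast_sum, Rat.cast_zero] at key
    rw [h_ext, sum_range_two_mul, sum_congr rfl h_term, ← mul_sum, key, mul_zero]
  · rw [show 2 * m + 1 + 1 = 2 * (m + 1) by ring, sum_range_two_mul]
    refine sum_eq_zero fun j hj => ?_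
    have hjm : j ≤ m := Nat.lt_succ_iff.mp (mem_range.mp hj)
    rw [show 2 * m + 1 - 2 * j = 2 * (m - j) + 1 by omega,
      Real.iteratedDeriv_two_mul_add_one_sin_pi_div_two, secantNumber_two_mul_add_one]
    simp

theorem eq_of_sum_choose_mul_mul_eq_zero {R : Type*} [CommRing R] {a b s : ℕ → R} (hs : s 0 = 1)
    (h0 : a 0 = b 0)
    (ha : ∀ n, 0 < n → ∑ k ∈ range (n + 1), n.choose k * a k * s (n - k) = 0)
    (hb : ∀ n, 0 < n → ∑ k ∈ range (n + 1), n.choose k * b k * s (n - k) = 0) : a = b := by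
  funext n
  induction n using Nat.strong_induction_on with
  | _ n ih =>
    rcases n.eq_zero_or_pos with rfl | hn
    · exact h0
    have ha' := ha n hn
    have hb' := hb n hn
    rw [sum_range_succ, Nat.choose_self, Nat.sub_self, hs] at ha' hb'
    rw [sum_congr rfl fun k hk => by rw [ih k (mem_range.mp hk)]] at ha'
    linear_combination ha' - hb'

theorem sum_choose_mul_iteratedDeriv_mul_iteratedDeriv_eq_zero {𝕜 𝔸 : Type*}
    [NontriviallyNormedField 𝕜] [NormedRing 𝔸] [NormedAlgebra 𝕜 𝔸] {f g : 𝕜 → 𝔸} {x : 𝕜}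
    {n : ℕ} (hf : ContDiffAt 𝕜 n f x) (hg : ContDiffAt 𝕜 n g x) (hfg : f * g =ᶠ[𝓝 x] 1)
    (hn : 0 < n) :
    ∑ k ∈ range (n + 1), n.choose k * iteratedDeriv k f x * iteratedDeriv (n - k) g x = 0 := by
  rw [← iteratedDeriv_mul hf hg, hfg.iteratedDeriv_eq, Pi.one_def, iteratedDeriv_const,
    if_neg hn.ne']

theorem iteratedDeriv_sin_pi_mul_one_half (j : ℕ) :
    iteratedDeriv j (fun x => sin (π * x)) (1 / 2) = π ^ j * iteratedDeriv j sin (π / 2) := by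
  simp only [iteratedDeriv_comp_const_mul contDiff_sin, mul_one_div]

theorem iteratedDeriv_one_div_sin_pi_mul_one_half (k : ℕ) :
    iteratedDeriv k (fun x => 1 / sin (π * x)) (1 / 2) = π ^ k * secantNumber k := by
  have hg : ContDiff ℝ ⊤ fun x => sin (π * x) :=
    contDiff_sin.comp (contDiff_const.mul contDiff_id)
  have hne : sin (π * (1 / 2)) ≠ 0 := by rw [mul_one_div, sin_pi_div_two]; exact one_ne_zero
  have hf : ContDiffAt ℝ ⊤ (fun x => 1 / sin (π * x)) (1 / 2) :=
    contDiffAt_const.div hg.contDiffAt hne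
  have hfg : (fun x => 1 / sin (π * x)) * (fun x => sin (π * x)) =ᶠ[𝓝 (1 / 2)] 1 :=
    (hg.continuous.continuousAt.eventually_ne hne).mono fun x hx => one_div_mul_cancel hx
  refine congrFun (eq_of_sum_choose_mul_mul_eq_zero
    (a := fun k => iteratedDeriv k (fun x => 1 / sin (π * x)) (1 / 2))
    (b := fun k => π ^ k * (secantNumber k : ℝ))
    (s := fun j => π ^ j * iteratedDeriv j sin (π / 2))
    ?_ ?_ (fun n hn => ?_) (fun n hn => ?_)) k
  · simp
  · simp [secantNumber_zero, ← div_eq_mul_inv]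
  · simpa only [iteratedDeriv_sin_pi_mul_one_half] using
      sum_choose_mul_iteratedDeriv_mul_iteratedDeriv_eq_zero (hf.of_le le_top)
        (hg.contDiffAt.of_le le_top) hfg hn
  · calc _ = π ^ n * ∑ k ∈ range (n + 1),
          n.choose k * (secantNumber k : ℝ) * iteratedDeriv (n - k) sin (π / 2) := by
          rw [mul_sum]
          refine sum_congr rfl fun k hk => ?_
          rw [← pow_mul_pow_sub π (Nat.lt_succ_iff.mp (mem_range.mp hk))]
          ring
      _ = 0 := by rw [sum_choose_mul_secantNumber_mul_iteratedDeriv_sin hn, mul_zero]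

/-- Even-order derivatives of the cosecant function at `x = 1/2`, in terms of Bernoulli
polynomials. -/
theorem iteratedDeriv_even_csc_half (n : ℕ) (hn : 0 < n) :
    iteratedDeriv (2 * n) (fun x : ℝ => 1 / Real.sin (Real.pi * x)) (1 / 2) =
      (-1 : ℝ) ^ (n - 1) * (4 * (4 * Real.pi) ^ (2 * n) / (2 * n + 1)) *
        ((Polynomial.eval ((1 : ℚ) / 4) (Polynomial.bernoulli (2 * n + 1)) : ℚ) : ℝ) := by
  obtain ⟨m, rfl⟩ : ∃ m, n = m + 1 := ⟨n - 1, by omega⟩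
  rw [iteratedDeriv_one_div_sin_pi_mul_one_half, secantNumber_two_mul, Nat.add_sub_cancel]
  push_cast
  ring
end
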